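/- Let Q be a standard shifted domino tableau of shape λ with n dominoes and let S be a marked standard shifted domino tableau with demark(S) = Q. Then the type-B peak set of Q is contained in Des(S) △ (Des(S)+1), i.e., Peak^B(Des(Q)) ⊆ Des(S) △ (Des(S)+1), where △ denotes symmetric difference and Des(S)+1 = {d+1 : d ∈ Des(S)}. -/
import Mathlib


/-- A domino in the plane: cells indexed by (row, column) with rows increasing downward.
A horizontal domino occupies `(r,c)` and `(r,c+1)`; a vertical one occupies `(r,c)` and
`(r+1,c)`. -/
structure Domino where
  r : ℕ
  c : ℕ
  horiz : Bool
deriving DecidableEq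

/-- The two cells of a domino. -/
def Domino.cells (d : Domino) : Finset (ℕ × ℕ) :=
  if d.horiz then {(d.r, d.c), (d.r, d.c + 1)} else {(d.r, d.c), (d.r + 1, d.c)}

/-- `d` is strictly lower than `e`: every cell of `d` lies in a strictly lower row than every
cell of `e`. -/
def Domino.StrictlyLower (d e : Domino) : Prop :=
  ∀ x ∈ d.cells, ∀ y ∈ e.cells, y.1 < x.1

/-- A domino lies weakly above the main diagonal if some cell `(r,c)` has `r ≤ c`. -/
def Domino.WeaklyAbove (d : Domino) : Prop := ∃ x ∈ d.cells, x.1 ≤ x.2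

/-- A domino lies strictly below the main diagonal if every cell `(r,c)` has `c < r`. -/
def Domino.StrictlyBelowDiag (d : Domino) : Prop := ∀ x ∈ d.cells, x.2 < x.1

/-- A domino lies on the main diagonal if it contains a diagonal cell `(i,i)`. -/
def Domino.OnDiag (d : Domino) : Prop := ∃ i : ℕ, (i, i) ∈ d.cells

/-- `e` is left of and adjacent to `d`. -/
def Domino.LeftAdjacent (e d : Domino) : Prop :=
  ∃ r c : ℕ, (r, c) ∈ e.cells ∧ (r, c + 1) ∈ d.cells

/-- A standard shifted domino tableau with `n` dominoes weakly above the main diagonal: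
a shifted domino tiling of a Young diagram, together with a bijective filling of the
dominoes lying weakly above the main diagonal by `1, ..., n` (here `dom i` is the domino
with entry `i+1` for `i : Fin n`) such that entries increase from left to right along rows
and from top to bottom in columns. -/
structure SShDT (n : ℕ) where
  shape : YoungDiagram
  tiling : Finset Domino
  covers : ∀ x : ℕ × ℕ, x ∈ shape ↔ ∃ d ∈ tiling, x ∈ d.cells
  disjoint : ∀ d ∈ tiling, ∀ e ∈ tiling, d ≠ e → ∀ x ∈ d.cells, x ∉ e.cells
  shifted : ∀ d ∈ tiling, d.horiz = false → d.OnDiag →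
      ¬ (∀ e ∈ tiling, e.LeftAdjacent d → e.StrictlyBelowDiag)
  dom : Fin n → Domino
  dom_mem : ∀ i, dom i ∈ tiling
  dom_above : ∀ i, (dom i).WeaklyAbove
  dom_bij : ∀ d ∈ tiling, d.WeaklyAbove → ∃! i : Fin n, dom i = d
  incr_row : ∀ i j : Fin n, ∀ r c : ℕ,
      (r, c) ∈ (dom i).cells → (r, c + 1) ∈ (dom j).cells → i ≠ j → i < j
  incr_col : ∀ i j : Fin n, ∀ r c : ℕ,
      (r, c) ∈ (dom i).cells → (r + 1, c) ∈ (dom j).cells → i ≠ j → i < j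

/-- The descent set of a standard shifted domino tableau: `0` is a descent iff the domino with
entry `1` is vertical, and `i ∈ {1,...,n-1}` is a descent iff the domino with entry `i+1` is
strictly lower than the domino with entry `i`. -/
def SShDT.des {n : ℕ} (Q : SShDT n) : Set ℕ :=
  {i | ∃ h : i < n,
    if i = 0 then (Q.dom ⟨0, by omega⟩).horiz = false
    else Domino.StrictlyLower (Q.dom ⟨i, h⟩) (Q.dom ⟨i - 1, by omega⟩)}

/-- The descent set of the marked standard shifted domino tableau obtained from `Q` by priming
the entries in `P`: `0` is a descent iff `1` is primed or the domino with entry `1` is vertical;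
`i ≥ 1` is a descent iff either `i` is unprimed and `i ∈ Des(Q)`, or `i+1` is primed and
`i ∉ Des(Q)`. -/
def SShDT.mdes {n : ℕ} (Q : SShDT n) (P : Finset ℕ) : Set ℕ :=
  {i | ∃ h : i < n,
    if i = 0 then (1 ∈ P ∨ (Q.dom ⟨0, by omega⟩).horiz = false)
    else ((i ∉ P ∧ i ∈ Q.des) ∨ (i + 1 ∈ P ∧ i ∉ Q.des))}

/-- The type-B peak set of a set `I`: `{p ≥ 1 : p ∈ I, p - 1 ∉ I}`. -/
def peakB (I : Set ℕ) : Set ℕ := {p | 1 ≤ p ∧ p ∈ I ∧ p - 1 ∉ I}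

/-- For any marked standard shifted domino tableau `S` (given by `Q` together with the set `P`
of primed entries) with `demark(S) = Q`, the type-B peak set of `Des(Q)` is contained in
`Des(S) △ (Des(S) + 1)`. -/
theorem peakB_subset_symmDiff (n : ℕ) (Q : SShDT n) (P : Finset ℕ)
    (hP : P ⊆ Finset.Icc 1 n) :
    peakB Q.des ⊆
      ((Q.mdes P) \ ((· + 1) '' (Q.mdes P))) ∪ (((· + 1) '' (Q.mdes P)) \ (Q.mdes P)) := by
  intro p hp
  obtain ⟨hp1, ⟨hpn, hDes⟩, hpD'⟩ := hp
  have hpne : p ≠ 0 := by omega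
  rw [if_neg hpne] at hDes
  have hpinD : p ∈ Q.des := ⟨hpn, by rw [if_neg hpne]; exact hDes⟩
  have hM : p ∈ Q.mdes P ↔ p ∉ P := by
    constructor
    · rintro ⟨h, hif⟩
      rw [if_neg hpne] at hif
      rcases hif with ⟨hnp, _⟩ | ⟨_, hnd⟩
      · exact hnp
      · exact absurd hpinD hnd
    · intro hnp
      exact ⟨hpn, by rw [if_neg hpne]; exact Or.inl ⟨hnp, hpinD⟩⟩
  have hM' : (p - 1) ∈ Q.mdes P ↔ p ∈ P := by
    rcases Nat.lt_or_ge p 2 with h1 | h2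
    · have hp1' : p = 1 := by omega
      subst hp1'
      simp only [Nat.sub_self]
      have h0n : (0:ℕ) < n := by omega
      have hvert : ¬ (Q.dom ⟨0, h0n⟩).horiz = false := by
        intro hv
        exact hpD' ⟨h0n, by rw [if_pos rfl]; exact hv⟩
      constructor
      · rintro ⟨h, hif⟩
        rw [if_pos rfl] at hif
        rcases hif with h | h
        · exact h
        · exact absurd h hvert
      · intro h1P
        exact ⟨h0n, by rw [if_pos rfl]; exact Or.inl h1P⟩
    · have hne : p - 1 ≠ 0 := by omega
      have hlt : p - 1 < n := by omega
      have hsub : p - 1 + 1 = p := by omega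
      constructor
      · rintro ⟨h, hif⟩
        rw [if_neg hne] at hif
        rcases hif with ⟨_, hd⟩ | ⟨hpP, _⟩
        · exact absurd hd hpD'
        · rw [hsub] at hpP; exact hpP
      · intro hpP
        exact ⟨hlt, by rw [if_neg hne]; exact Or.inr ⟨by rw [hsub]; exact hpP, hpD'⟩⟩
  by_cases hpP : p ∈ P
  · right
    refine ⟨⟨p - 1, hM'.mpr hpP, show p - 1 + 1 = p by omega⟩, fun h => (hM.mp h) hpP⟩
  · left
    refine ⟨hM.mpr hpP, ?_⟩
    rintro ⟨x, hx, hxe⟩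
    have hxe' : x + 1 = p := hxe
    have : x = p - 1 := by omega
    subst this
    exact hpP (hM'.mp hx)
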